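/- For every rooted tree T and every non-root vertex v of T, the row of B_T indexed by the edge e(v) satisfies b_T^{e(v)} = Σ_{k ∈ desLv(v)} a_T^k − 2·Σ_{k ∈ desInt(v)} a_T^k as vectors indexed by the 2-element subsets of {0,…,n}, where desLv(v) is the set of leaves of T that are descendants of v and desInt(v) is the set of internal vertices of T that are descendants of v. -/

import Mathlib

attribute [local instance] Classical.propDecidable

/-- A rooted tree on leaves `0, …, n`, rooted at the leaf `0`, with all edges directed
away from the root, no vertices of degree two, together with its (uniquely determined)
most-recent-common-ancestor function `lca` on leaf labels.  The parent map `par` sends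
every non-root vertex to the vertex its unique incoming edge comes from, and fixes the
root.  A vertex `u` is a descendant of `v` iff some iterate of `par` sends `u` to `v`. -/
structure PhyloTree where
  n : ℕ
  hn : 1 ≤ n
  V : Type
  fintypeV : Fintype V
  leaf : Fin (n + 1) ↪ V
  par : V → V
  par_root : par (leaf 0) = leaf 0
  par_ne : ∀ v : V, v ≠ leaf 0 → par v ≠ v
  reaches_root : ∀ v : V, ∃ k : ℕ, par^[k] v = leaf 0
  leaf_iff : ∀ v : V, v ≠ leaf 0 → (v ∈ Set.range leaf ↔ ∀ u, par u ≠ v)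
  root_unique_child : ∃! u : V, u ≠ leaf 0 ∧ par u = leaf 0
  no_degree_two : ∀ v : V, v ∉ Set.range leaf → ∃ u w : V, u ≠ w ∧ par u = v ∧ par w = v
  lca : Fin (n + 1) → Fin (n + 1) → V
  lca_anc_left : ∀ i j, ∃ k : ℕ, par^[k] (leaf i) = lca i j
  lca_anc_right : ∀ i j, ∃ k : ℕ, par^[k] (leaf j) = lca i j
  lca_min : ∀ i j (w : V), (∃ k : ℕ, par^[k] (leaf i) = w) →
      (∃ k : ℕ, par^[k] (leaf j) = w) → ∃ k : ℕ, par^[k] (lca i j) = w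

instance (T : PhyloTree) : Fintype T.V := T.fintypeV

/-- `T.isAnc v u` : `v` is an ancestor of `u`, i.e. `u` is a descendant of `v`
(every vertex is a descendant of itself). -/
def PhyloTree.isAnc (T : PhyloTree) (v u : T.V) : Prop := ∃ k : ℕ, T.par^[k] u = v

/-- The 2-element subsets `{i,j}` of `{0, …, n}`, encoded as ordered pairs `i < j`. -/
abbrev PairIdx (n : ℕ) := {q : Fin (n + 1) × Fin (n + 1) // q.1 < q.2}

/-- The non-root vertices of `T`; these index the rows of `A_T`, and are also in
bijection `v ↦ e(v)` with the edges of `T`, so they also index the rows of `B_T`. -/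
abbrev PhyloTree.NR (T : PhyloTree) := {v : T.V // v ≠ T.leaf 0}

/-- The matrix `A_T`, with rows indexed by non-root vertices and columns indexed by
2-element subsets `{i,j}` of `{0, …, n}`: the entry is `1` if `v = i`, `v = j` or
`v = lca(i,j)`, and `0` otherwise. -/
noncomputable def Amat (T : PhyloTree) (R : Type*) [Zero R] [One R] :
    Matrix T.NR (PairIdx T.n) R :=
  Matrix.of fun v s =>
    if v.1 = T.leaf s.1.1 ∨ v.1 = T.leaf s.1.2 ∨ v.1 = T.lca s.1.1 s.1.2 then 1 else 0

/-- `T.onPath v i j` : the edge `e(v)` lies on the unique path between the leaves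
`i` and `j`, i.e. `v` lies strictly below `lca(i,j)` on the segment from `lca(i,j)`
down to `i` or on the segment from `lca(i,j)` down to `j`. -/
def PhyloTree.onPath (T : PhyloTree) (v : T.V) (i j : Fin (T.n + 1)) : Prop :=
  v ≠ T.lca i j ∧ T.isAnc (T.lca i j) v ∧ (T.isAnc v (T.leaf i) ∨ T.isAnc v (T.leaf j))

/-- The matrix `B_T`, with rows indexed by the edges `e(v)` of `T` (equivalently, by the
non-root vertices `v`) and columns indexed by 2-element subsets `{i,j}` of `{0, …, n}`:
the entry is `1` if `e(v) ∈ P(i,j)` and `0` otherwise. -/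
noncomputable def Bmat (T : PhyloTree) (R : Type*) [Zero R] [One R] :
    Matrix T.NR (PairIdx T.n) R :=
  Matrix.of fun v s => if T.onPath v.1 s.1.1 s.1.2 then 1 else 0

/-- The monomial map `φ_M` associated to a nonnegative-integer matrix `M`, sending
`p_c` to `∏_r t_r ^ M(r,c)`. -/
noncomputable def toricMap {R C : Type*} [Fintype R] (M : Matrix R C ℕ) :
    MvPolynomial C ℂ →ₐ[ℂ] MvPolynomial R ℂ :=
  MvPolynomial.aeval fun c => ∏ r : R, MvPolynomial.X r ^ M r c

/-! Fix the column `{i, j}`, let `ℓ = lca(i, j)` and write `[v ≥ x]` for the indicator of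
`x` being a descendant of `v`. The edge `e(v)` lies on the path between `i` and `j` exactly when
`v` lies above one of the two leaves but not above `ℓ`, so
`B(e(v), {i,j}) = [v ≥ i] + [v ≥ j] - 2 [v ≥ ℓ]`. Among the vertices below `v`, the leaves
contribute `[v ≥ i] + [v ≥ j]` to `∑ a^k`, and the only internal vertex that can contribute is
`ℓ`, which is internal as soon as it is not the root. -/

theorem Finset.sum_filter_ite_eq_of_injective {ι α M : Type*} [Fintype ι] [DecidableEq α]
    [AddCommMonoid M] {f : ι → α} (hf : Function.Injective f) {Q : α → Prop} [DecidablePred Q]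
    (hQ : ∀ a, Q a → a ∈ Set.range f) (a : α) (b : M) :
    ∑ k ∈ univ.filter (fun k => Q (f k)), (if f k = a then b else 0) = if Q a then b else 0 := by
  rw [Finset.sum_filter]
  by_cases ha : Q a
  · obtain ⟨k₀, rfl⟩ := hQ a ha
    rw [if_pos ha, Finset.sum_eq_single_of_mem k₀ (Finset.mem_univ _) fun k _ hk => by
      simp [hf.ne hk]]
    simp [ha]
  · rw [if_neg ha]
    refine Finset.sum_eq_zero fun k _ => ?_
    split_ifs with hk hka
    · exact absurd (hka ▸ hk) ha
    all_goals rfl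

namespace PhyloTree

variable (T : PhyloTree)

lemma iterate_par_root (k : ℕ) : T.par^[k] (T.leaf 0) = T.leaf 0 :=
  Function.iterate_fixed T.par_root k

lemma ne_root_of_isAnc {v u : T.V} (hv : v ≠ T.leaf 0) (h : T.isAnc v u) : u ≠ T.leaf 0 := by
  rintro rfl
  obtain ⟨k, hk⟩ := h
  exact hv (hk ▸ T.iterate_par_root k)

lemma eq_root_of_iterate_par_eq {a : T.V} {m : ℕ} (hm : 0 < m) (h : T.par^[m] a = a) :
    a = T.leaf 0 := by
  obtain ⟨N, hN⟩ := T.reaches_root a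
  have hperiodic : ∀ q : ℕ, T.par^[q * m] a = a := fun q =>
    Function.IsPeriodicPt.const_mul (f := T.par) h q
  calc a = T.par^[N * m - N + N] a := by
        rw [Nat.sub_add_cancel (Nat.le_mul_of_pos_right N hm), hperiodic]
    _ = T.leaf 0 := by rw [Function.iterate_add_apply, hN, T.iterate_par_root]

lemma isAnc_trans {a b c : T.V} (hab : T.isAnc a b) (hbc : T.isAnc b c) : T.isAnc a c := by
  obtain ⟨k, hk⟩ := hab
  obtain ⟨l, hl⟩ := hbc
  exact ⟨k + l, by rw [Function.iterate_add_apply, hl, hk]⟩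

lemma isAnc_antisymm {a b : T.V} (hab : T.isAnc a b) (hba : T.isAnc b a) : a = b := by
  obtain ⟨k, hk⟩ := hab
  obtain ⟨l, hl⟩ := hba
  rcases Nat.eq_zero_or_pos (k + l) with h | h
  · obtain ⟨rfl, -⟩ := Nat.add_eq_zero_iff.mp h
    exact hk.symm
  · have ha := T.eq_root_of_iterate_par_eq h (by rw [Function.iterate_add_apply, hl, hk])
    rw [← hl, ha, T.iterate_par_root]

lemma isAnc_total_of_isAnc {a b u : T.V} (ha : T.isAnc a u) (hb : T.isAnc b u) :
    T.isAnc a b ∨ T.isAnc b a := by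
  obtain ⟨k, hk⟩ := ha
  obtain ⟨l, hl⟩ := hb
  rcases le_total k l with h | h
  · exact .inr ⟨l - k, by rw [← hk, ← Function.iterate_add_apply, Nat.sub_add_cancel h, hl]⟩
  · exact .inl ⟨k - l, by rw [← hl, ← Function.iterate_add_apply, Nat.sub_add_cancel h, hk]⟩

lemma eq_leaf_of_isAnc_leaf {m : Fin (T.n + 1)} (hm : m ≠ 0) {w : T.V}
    (h : T.isAnc (T.leaf m) w) : w = T.leaf m := by
  obtain ⟨_ | k, hk⟩ := h
  · exact hk
  · rw [Function.iterate_succ_apply'] at hk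
    exact absurd hk <| (T.leaf_iff _ (T.leaf.injective.ne hm)).mp ⟨m, rfl⟩ _

lemma lca_notMem_range_leaf {i j : Fin (T.n + 1)} (hij : i ≠ j) (h : T.lca i j ≠ T.leaf 0) :
    T.lca i j ∉ Set.range T.leaf := by
  rintro ⟨m, hm⟩
  have hm0 : m ≠ 0 := by rintro rfl; exact h hm.symm
  have hi := T.eq_leaf_of_isAnc_leaf hm0 (hm ▸ T.lca_anc_left i j)
  have hj := T.eq_leaf_of_isAnc_leaf hm0 (hm ▸ T.lca_anc_right i j)
  exact hij (T.leaf.injective (hi.trans hj.symm))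

lemma not_onPath_of_isAnc_lca {v : T.V} {i j : Fin (T.n + 1)} (h : T.isAnc v (T.lca i j)) :
    ¬ T.onPath v i j :=
  fun ⟨hne, hanc, _⟩ => hne (T.isAnc_antisymm h hanc)

lemma onPath_iff_of_not_isAnc_lca {v : T.V} {i j : Fin (T.n + 1)}
    (h : ¬ T.isAnc v (T.lca i j)) :
    T.onPath v i j ↔ T.isAnc v (T.leaf i) ∨ T.isAnc v (T.leaf j) := by
  refine ⟨fun hp => hp.2.2, fun hv => ⟨fun he => h ⟨0, he.symm⟩, ?_, hv⟩⟩
  have hlca := hv.elim (T.isAnc_total_of_isAnc (T.lca_anc_left i j))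
    (T.isAnc_total_of_isAnc (T.lca_anc_right i j))
  exact hlca.resolve_right h

lemma onPath_indicator {R : Type*} [Ring R] (v : T.V) (i j : Fin (T.n + 1)) :
    (if T.onPath v i j then (1 : R) else 0) =
      (if T.isAnc v (T.leaf i) then 1 else 0) + (if T.isAnc v (T.leaf j) then 1 else 0)
        - 2 * (if T.isAnc v (T.lca i j) then 1 else 0) := by
  by_cases hlca : T.isAnc v (T.lca i j)
  · have hi := T.isAnc_trans hlca (T.lca_anc_left i j)
    have hj := T.isAnc_trans hlca (T.lca_anc_right i j)
    rw [if_neg (T.not_onPath_of_isAnc_lca hlca)]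
    simp only [hi, hj, hlca, if_true]
    norm_num
  · have hboth : ¬ (T.isAnc v (T.leaf i) ∧ T.isAnc v (T.leaf j)) :=
      fun ⟨hi, hj⟩ => hlca (T.lca_min i j v hi hj)
    simp only [T.onPath_iff_of_not_isAnc_lca hlca, hlca, if_false]
    split_ifs <;> simp_all

lemma Amat_apply_of_mem_range_leaf {R : Type*} [AddMonoidWithOne R] (k : T.NR)
    (hk : k.1 ∈ Set.range T.leaf) (s : PairIdx T.n) :
    Amat T R k s = (if k.1 = T.leaf s.1.1 then 1 else 0) + (if k.1 = T.leaf s.1.2 then 1 else 0) := by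
  have hlca : k.1 ≠ T.lca s.1.1 s.1.2 := fun h =>
    T.lca_notMem_range_leaf s.2.ne (h ▸ k.2) (h ▸ hk)
  have hij : ¬ (k.1 = T.leaf s.1.1 ∧ k.1 = T.leaf s.1.2) := fun ⟨hi, hj⟩ =>
    s.2.ne (T.leaf.injective (hi.symm.trans hj))
  simp only [Amat, Matrix.of_apply, hlca, or_false]
  split_ifs <;> simp_all

lemma Amat_apply_of_notMem_range_leaf {R : Type*} [Zero R] [One R] (k : T.NR)
    (hk : k.1 ∉ Set.range T.leaf) (s : PairIdx T.n) :
    Amat T R k s = if k.1 = T.lca s.1.1 s.1.2 then 1 else 0 := by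
  have hi : k.1 ≠ T.leaf s.1.1 := fun h => hk ⟨_, h.symm⟩
  have hj : k.1 ≠ T.leaf s.1.2 := fun h => hk ⟨_, h.symm⟩
  simp only [Amat, Matrix.of_apply, hi, hj, false_or]


lemma sum_Amat_desc_leaves_apply {R : Type*} [AddCommMonoidWithOne R] (v : T.NR) (s : PairIdx T.n) :
    (∑ k ∈ Finset.univ.filter
        (fun k : T.NR => k.1 ∈ Set.range T.leaf ∧ T.isAnc v.1 k.1), Amat T R k) s =
      (if T.isAnc v.1 (T.leaf s.1.1) then 1 else 0) +
        (if T.isAnc v.1 (T.leaf s.1.2) then 1 else 0) := by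
  have hdesc (u : T.V) (h : u ∈ Set.range T.leaf ∧ T.isAnc v.1 u) :
      u ∈ Set.range (Subtype.val : T.NR → T.V) :=
    ⟨⟨u, T.ne_root_of_isAnc v.2 h.2⟩, rfl⟩
  erw [Finset.sum_apply]
  rw [Finset.sum_congr rfl fun k hk =>
      T.Amat_apply_of_mem_range_leaf k (Finset.mem_filter.mp hk).2.1 s,
    Finset.sum_add_distrib, Finset.sum_filter_ite_eq_of_injective Subtype.val_injective hdesc,
    Finset.sum_filter_ite_eq_of_injective Subtype.val_injective hdesc]
  simp

lemma sum_Amat_desc_internal_apply {R : Type*} [AddCommMonoidWithOne R] (v : T.NR) (s : PairIdx T.n) :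
    (∑ k ∈ Finset.univ.filter
        (fun k : T.NR => k.1 ∉ Set.range T.leaf ∧ T.isAnc v.1 k.1), Amat T R k) s =
      if T.isAnc v.1 (T.lca s.1.1 s.1.2) then 1 else 0 := by
  have hdesc (u : T.V) (h : u ∉ Set.range T.leaf ∧ T.isAnc v.1 u) :
      u ∈ Set.range (Subtype.val : T.NR → T.V) :=
    ⟨⟨u, T.ne_root_of_isAnc v.2 h.2⟩, rfl⟩
  erw [Finset.sum_apply]
  rw [Finset.sum_congr rfl fun k hk =>
      T.Amat_apply_of_notMem_range_leaf k (Finset.mem_filter.mp hk).2.1 s,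
    Finset.sum_filter_ite_eq_of_injective Subtype.val_injective hdesc]
  refine if_congr ⟨And.right, fun h => ⟨?_, h⟩⟩ rfl rfl
  exact T.lca_notMem_range_leaf s.2.ne (T.ne_root_of_isAnc v.2 h)

end PhyloTree

/-- For every rooted tree `T` and every non-root vertex `v` of `T`, the row of `B_T`
indexed by the edge `e(v)` equals `∑_{k ∈ desLv(v)} a_T^k − 2 ∑_{k ∈ desInt(v)} a_T^k`,
where `desLv(v)` is the set of leaves of `T` that are descendants of `v` and
`desInt(v)` is the set of internal vertices of `T` that are descendants of `v`. -/
theorem statement4 (T : PhyloTree) (v : T.NR) :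
    Bmat T ℚ v =
      (∑ k ∈ Finset.univ.filter
          (fun k : T.NR => k.1 ∈ Set.range T.leaf ∧ T.isAnc v.1 k.1), Amat T ℚ k)
      - 2 • ∑ k ∈ Finset.univ.filter
          (fun k : T.NR => k.1 ∉ Set.range T.leaf ∧ T.isAnc v.1 k.1), Amat T ℚ k := by
  funext s
  rw [Pi.sub_apply, Pi.smul_apply, T.sum_Amat_desc_leaves_apply, T.sum_Amat_desc_internal_apply,
    nsmul_eq_mul, Nat.cast_ofNat]
  exact T.onPath_indicator v.1 s.1.1 s.1.2
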